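/- arXiv:2004.05348 — 2 statements merged into one kernel-verified Lean document; each statement's English description precedes it below -/
import Mathlib

section
/- Let J = α·Σ_{i=−(L−1)}^{L−1} w_i vec(A_i) vec(A_i)^H + (1−α)·Σ_{i=−(L−1)}^{L−1} w̃_i vec(B_i) vec(B_i)^H with real α, w_i, w̃_i. Then for every k with −(L−1) ≤ k ≤ L−1, J·vec(B_k) = (1−α)·w̃_k·(L − |k|)·vec(B_k); that is, vec(B_k) is an eigenvector of J with eigenvalue λ_B(k) = (1−α)·w̃_k·(L − |k|). -/
open scoped BigOperators
open Matrix

/-- The `L × L` shift (Toeplitz) matrix `U_k` with `(U_k)_{i,j} = 1` if `j - i = k`. -/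
def shiftU (L : ℕ) (k : ℤ) : Matrix (Fin L) (Fin L) ℂ :=
  Matrix.of fun i j => if (j : ℤ) - (i : ℤ) = k then 1 else 0

/-- The `2L × 2L` block-diagonal matrix `A_k = diag(U_k, U_k)`. -/
def AMat (L : ℕ) (k : ℤ) : Matrix (Fin L ⊕ Fin L) (Fin L ⊕ Fin L) ℂ :=
  Matrix.fromBlocks (shiftU L k) 0 0 (shiftU L k)

/-- The `2L × 2L` block matrix `B_k = [[0, U_k], [0, 0]]`. -/
def BMat (L : ℕ) (k : ℤ) : Matrix (Fin L ⊕ Fin L) (Fin L ⊕ Fin L) ℂ :=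
  Matrix.fromBlocks 0 (shiftU L k) 0 0

/-- Vectorization of a square matrix. -/
def vecM {n : Type*} (M : Matrix n n ℂ) : n × n → ℂ := fun p => M p.1 p.2

/-- `J = α Σ_i w_i vec(A_i) vec(A_i)^H + (1-α) Σ_i w̃_i vec(B_i) vec(B_i)^H`. -/
noncomputable def JMat (L : ℕ) (α : ℝ) (w wt : ℤ → ℝ) :
    Matrix ((Fin L ⊕ Fin L) × (Fin L ⊕ Fin L)) ((Fin L ⊕ Fin L) × (Fin L ⊕ Fin L)) ℂ :=
  (α : ℂ) • ∑ k ∈ Finset.Icc (-(L : ℤ) + 1) ((L : ℤ) - 1),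
      (w k : ℂ) • Matrix.vecMulVec (vecM (AMat L k)) (star (vecM (AMat L k)))
  + ((1 - α : ℝ) : ℂ) • ∑ k ∈ Finset.Icc (-(L : ℤ) + 1) ((L : ℤ) - 1),
      (wt k : ℂ) • Matrix.vecMulVec (vecM (BMat L k)) (star (vecM (BMat L k)))

/-!
`vec(A_i)` is supported on the diagonal blocks and `vec(B_k)` on the upper right block, so every
`A`-term of `J` annihilates `vec(B_k)`. Among the `B`-terms only `i = k` survives, because
distinct shift matrices have disjoint supports; the surviving coefficient is
`‖vec(U_k)‖² = #{(a, b) | b - a = k} = L - |k|`.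
-/

open Finset

lemma sum_smul_vecMulVec_mulVec {R ι n : Type*} [CommSemiring R] [Fintype n] (s : Finset ι)
    (c : ι → R) (u v : ι → n → R) (x : n → R) :
    (∑ i ∈ s, c i • vecMulVec (u i) (v i)) *ᵥ x = ∑ i ∈ s, (c i * (v i ⬝ᵥ x)) • u i := by
  simp only [sum_mulVec, smul_mulVec, vecMulVec_mulVec, op_smul_eq_smul, smul_smul]

@[simp]
lemma vecM_zero {n : Type*} : vecM (0 : Matrix n n ℂ) = 0 := rfl

lemma star_vecM_fromBlocks_dotProduct {n : Type*} [Fintype n]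
    (A B C D A' B' C' D' : Matrix n n ℂ) :
    star (vecM (fromBlocks A B C D)) ⬝ᵥ vecM (fromBlocks A' B' C' D')
      = star (vecM A) ⬝ᵥ vecM A' + star (vecM B) ⬝ᵥ vecM B'
        + (star (vecM C) ⬝ᵥ vecM C' + star (vecM D) ⬝ᵥ vecM D') := by
  simp only [dotProduct, Fintype.sum_prod_type, Fintype.sum_sum_type, sum_add_distrib, vecM,
    Pi.star_apply, fromBlocks_apply₁₁, fromBlocks_apply₁₂, fromBlocks_apply₂₁,
    fromBlocks_apply₂₂]
  ring

lemma card_filter_sub_eq_natCast (L m : ℕ) :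
    #{p : Fin L × Fin L | (p.2 : ℤ) - p.1 = m} = L - m := by
  rw [← card_range (L - m)]
  refine card_bij' (fun p _ => (p.1 : ℕ))
    (fun a ha => (⟨a, by grind⟩, ⟨a + m, by grind⟩)) ?_ ?_ ?_ ?_
  · intro p hp
    simp only [mem_filter, mem_univ, true_and] at hp
    have := p.2.isLt
    exact mem_range.mpr (by omega)
  · intro a _
    simp
  · intro p hp
    simp only [mem_filter, mem_univ, true_and] at hp
    ext
    · rfl
    · simp only
      omega
  · intro a _
    rfl

lemma card_filter_sub_eq (L : ℕ) (k : ℤ) :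
    #{p : Fin L × Fin L | (p.2 : ℤ) - p.1 = k} = L - k.natAbs := by
  rcases Int.natAbs_eq k with hk | hk
  · rw [← card_filter_sub_eq_natCast, ← hk]
  · rw [← card_filter_sub_eq_natCast]
    refine card_nbij' Prod.swap Prod.swap ?_ ?_ (fun _ _ => rfl) (fun _ _ => rfl) <;>
      intro p hp <;> simp only [coe_filter, mem_univ, true_and, Set.mem_ofPred_eq,
        Prod.fst_swap, Prod.snd_swap] at hp ⊢ <;> omega

lemma star_vecM_shiftU_dotProduct (L : ℕ) (i k : ℤ) :
    star (vecM (shiftU L i)) ⬝ᵥ vecM (shiftU L k)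
      = if i = k then ((L - k.natAbs : ℕ) : ℂ) else 0 := by
  simp only [dotProduct, vecM, shiftU, of_apply, Pi.star_apply, apply_ite star, star_one,
    star_zero, ite_zero_mul_ite_zero, one_mul]
  split_ifs with hik
  · simp only [hik, and_self, sum_boole, card_filter_sub_eq]
  · exact sum_eq_zero fun p _ => if_neg (by grind)

lemma star_vecM_AMat_dotProduct_vecM_BMat (L : ℕ) (i k : ℤ) :
    star (vecM (AMat L i)) ⬝ᵥ vecM (BMat L k) = 0 := by
  simp [AMat, BMat, star_vecM_fromBlocks_dotProduct]

lemma star_vecM_BMat_dotProduct_vecM_BMat (L : ℕ) (i k : ℤ) :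
    star (vecM (BMat L i)) ⬝ᵥ vecM (BMat L k)
      = if i = k then ((L - k.natAbs : ℕ) : ℂ) else 0 := by
  simp [BMat, star_vecM_fromBlocks_dotProduct, star_vecM_shiftU_dotProduct]

/-- For every `-(L-1) ≤ k ≤ L-1`, `J vec(B_k) = (1-α) w̃_k (L - |k|) vec(B_k)`; i.e.
`vec(B_k)` is an eigenvector of `J` with eigenvalue `λ_B(k) = (1-α) w̃_k (L - |k|)`. -/
theorem stmt6 (L : ℕ) (α : ℝ) (w wt : ℤ → ℝ) (k : ℤ) (hk : |k| ≤ (L : ℤ) - 1) :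
    JMat L α w wt *ᵥ vecM (BMat L k)
      = (((1 - α) * wt k * ((L : ℝ) - (k.natAbs : ℝ)) : ℝ) : ℂ) • vecM (BMat L k) := by
  obtain ⟨hk_lo, hk_hi⟩ := abs_le.mp hk
  have hkL : k.natAbs ≤ L := by omega
  have hk_mem : k ∈ Icc (-(L : ℤ) + 1) (L - 1) := mem_Icc.mpr ⟨by omega, hk_hi⟩
  simp only [JMat, add_mulVec, smul_mulVec, sum_smul_vecMulVec_mulVec,
    star_vecM_AMat_dotProduct_vecM_BMat, star_vecM_BMat_dotProduct_vecM_BMat, mul_zero,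
    zero_smul, sum_const_zero, smul_zero, zero_add, mul_ite, ite_smul, sum_ite_eq',
    if_pos hk_mem, smul_smul]
  congr 1
  push_cast [hkL]
  ring
end

section
/- (Theorem 1, Section IV, quantitative form) Let (a_n) be the Prouhet–Thue–Morse sequence, M ≥ 0, N = 2^{M+1}, and β_m = Σ_{n=0}^{N−1} a_n·n^m. Let x, y be complex sequences of length L and for each n define s_n = x if a_n = 0 and s_n = y if a_n = 1. Then for every 0 ≤ m ≤ M and every lag k with −(L−1) ≤ k ≤ L−1, Σ_{n=0}^{N−1} n^m·C_{s_n}(k) = β_m·( C_x(k) + C_y(k) ). In particular, if δ ≥ 0 and |C_x(k) + C_y(k)| ≤ δ for all k with 0 < |k| < Z, then |Σ_{n=0}^{N−1} n^m·C_{s_n}(k)| ≤ β_m·δ for all such k and all 0 ≤ m ≤ M. -/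
/-!
Since `a n ∈ {0, 1}`, the weighted sum splits as
`(Σ_{a n = 0} n^m) C_x(k) + (Σ_{a n = 1} n^m) C_y(k)`, and by Prouhet's theorem the two
moments agree, so both equal `β_m`. Prouhet's theorem is proved by induction on `M`:
splitting `n` into `2k` and `2k + 1` turns the signed moment of order `m` into a combination
of signed moments of order `< m` of the first half, because the top binomial terms of
`(2k + 1)^m - (2k)^m` cancel.
-/

open scoped BigOperators

/-- Aperiodic cross-correlation of two length-`L` complex sequences. -/
noncomputable def aCorr (L : ℕ) (x y : ℕ → ℂ) (k : ℤ) : ℂ :=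
  if 0 ≤ k then
    ∑ l ∈ Finset.range (L - k.toNat), x l * (starRingEnd ℂ) (y (l + k.toNat))
  else
    ∑ l ∈ Finset.range (L - (-k).toNat), x (l + (-k).toNat) * (starRingEnd ℂ) (y l)

open Finset

theorem Finset.sum_range_two_mul {M : Type*} [AddCommMonoid M] (f : ℕ → M) (n : ℕ) :
    ∑ i ∈ range (2 * n), f i = ∑ i ∈ range n, (f (2 * i) + f (2 * i + 1)) := by
  induction n with
  | zero => simp
  | succ n ih =>
    rw [Nat.mul_succ, sum_range_succ, sum_range_succ, ih, sum_range_succ, add_assoc]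

section ThueMorse

variable {a : ℕ → ℕ}

theorem thueMorse_le_one (ha0 : a 0 = 0) (hae : ∀ k, a (2 * k) = a k)
    (hao : ∀ k, a (2 * k + 1) = 1 - a k) (n : ℕ) : a n ≤ 1 := by
  induction n using Nat.strong_induction_on with
  | _ n ih =>
    obtain ⟨k, rfl | rfl⟩ := Nat.even_or_odd' n
    · rcases k.eq_zero_or_pos with rfl | hk
      · simp [ha0]
      · exact hae k ▸ ih k (by omega)
    · rw [hao]; omega

theorem thueMorse_sum_sign_mul_pow_eq_zero {R : Type*} [CommRing R] (ha0 : a 0 = 0)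
    (hae : ∀ k, a (2 * k) = a k) (hao : ∀ k, a (2 * k + 1) = 1 - a k) (M : ℕ) :
    ∀ m ≤ M, ∑ n ∈ range (2 ^ (M + 1)), (1 - 2 * (a n : R)) * (n : R) ^ m = 0 := by
  have hodd : ∀ k, (1 - 2 * (a (2 * k + 1) : R)) = -(1 - 2 * (a k : R)) := fun k => by
    rw [hao, Nat.cast_sub (thueMorse_le_one ha0 hae hao k)]; push_cast; ring
  induction M with
  | zero =>
    intro m hm
    have ha1 : a 1 = 1 := by simpa [ha0] using hao 0
    simp [Nat.le_zero.mp hm, sum_range_succ, ha0, ha1]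
  | succ M ih =>
    intro m hm
    have hpow : ∀ k : ℕ, ((2 * k + 1 : ℕ) : R) ^ m - ((2 * k : ℕ) : R) ^ m
        = ∑ j ∈ range m, (m.choose j : R) * 2 ^ j * (k : R) ^ j := fun k => by
      push_cast
      rw [add_pow, sum_range_succ]
      simp only [one_pow, mul_one, Nat.choose_self, Nat.cast_one, add_sub_cancel_right]
      exact sum_congr rfl fun j _ => by ring
    calc ∑ n ∈ range (2 ^ (M + 1 + 1)), (1 - 2 * (a n : R)) * (n : R) ^ m
        = -∑ j ∈ range m, (m.choose j : R) * 2 ^ j *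
            ∑ k ∈ range (2 ^ (M + 1)), (1 - 2 * (a k : R)) * (k : R) ^ j := by
          rw [pow_succ', sum_range_two_mul]
          simp_rw [mul_sum]
          rw [sum_comm, ← sum_neg_distrib]
          refine sum_congr rfl fun k _ => ?_
          simp_rw [hae, hodd, mul_left_comm _ (1 - 2 * (a k : R)), ← mul_sum, ← hpow]
          ring
      _ = 0 := by
          rw [neg_eq_zero]
          exact sum_eq_zero fun j hj => by
            rw [ih j (by have := mem_range.mp hj; omega), mul_zero]

theorem thueMorse_sum_one_sub_mul_pow {R : Type*} [CommRing R] (ha0 : a 0 = 0)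
    (hae : ∀ k, a (2 * k) = a k) (hao : ∀ k, a (2 * k + 1) = 1 - a k) {M m : ℕ} (hm : m ≤ M) :
    ∑ n ∈ range (2 ^ (M + 1)), (1 - (a n : R)) * (n : R) ^ m
      = ∑ n ∈ range (2 ^ (M + 1)), (a n : R) * (n : R) ^ m := by
  rw [← sub_eq_zero, ← sum_sub_distrib,
    ← thueMorse_sum_sign_mul_pow_eq_zero ha0 hae hao M m hm]
  exact sum_congr rfl fun n _ => by ring

end ThueMorse

theorem Finset.sum_mul_apply_ite_eq {ι α R : Type*} [CommRing R] (s : Finset ι) {a : ι → ℕ}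
    (ha : ∀ n, a n ≤ 1) (w : ι → R) (F : α → R) (x y : α) :
    ∑ n ∈ s, w n * F (if a n = 0 then x else y)
      = (∑ n ∈ s, (1 - (a n : R)) * w n) * F x + (∑ n ∈ s, (a n : R) * w n) * F y := by
  rw [sum_mul, sum_mul, ← sum_add_distrib]
  refine sum_congr rfl fun n _ => ?_
  obtain h | h : a n = 0 ∨ a n = 1 := by have := ha n; omega
  all_goals simp [h]

theorem stmt16_general (M L Z : ℕ)
    (a : ℕ → ℕ) (ha0 : a 0 = 0)
    (hae : ∀ k, a (2 * k) = a k) (hao : ∀ k, a (2 * k + 1) = 1 - a k)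
    (x y : ℕ → ℂ) (s : ℕ → ℕ → ℂ) (hs : ∀ n, s n = if a n = 0 then x else y)
    (δ : ℝ) :
    (∀ m ≤ M, ∀ k : ℤ, |k| ≤ (L : ℤ) - 1 →
      ∑ n ∈ Finset.range (2 ^ (M + 1)), (n : ℂ) ^ m * aCorr L (s n) (s n) k
        = ((∑ n ∈ Finset.range (2 ^ (M + 1)), a n * n ^ m : ℕ) : ℂ)
            * (aCorr L x x k + aCorr L y y k)) ∧
    ((∀ k : ℤ, 0 < |k| → |k| < (Z : ℤ) →
        ‖aCorr L x x k + aCorr L y y k‖ ≤ δ) →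
      ∀ m ≤ M, ∀ k : ℤ, 0 < |k| → |k| < (Z : ℤ) →
        ‖∑ n ∈ Finset.range (2 ^ (M + 1)),
            (n : ℂ) ^ m * aCorr L (s n) (s n) k‖
          ≤ ((∑ n ∈ Finset.range (2 ^ (M + 1)), a n * n ^ m : ℕ) : ℝ) * δ) := by
  have hcorr : ∀ m ≤ M, ∀ k : ℤ,
      ∑ n ∈ range (2 ^ (M + 1)), (n : ℂ) ^ m * aCorr L (s n) (s n) k
        = ((∑ n ∈ range (2 ^ (M + 1)), a n * n ^ m : ℕ) : ℂ)
            * (aCorr L x x k + aCorr L y y k) := fun m hm k => by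
    simp only [hs]
    rw [sum_mul_apply_ite_eq _ (thueMorse_le_one ha0 hae hao) (fun n => (n : ℂ) ^ m)
        (fun u => aCorr L u u k),
      thueMorse_sum_one_sub_mul_pow ha0 hae hao hm]
    push_cast
    ring
  refine ⟨fun m hm k _ => hcorr m hm k, fun hbound m hm k hk0 hkZ => ?_⟩
  rw [hcorr m hm k, norm_mul, Complex.norm_natCast]
  exact mul_le_mul_of_nonneg_left (hbound k hk0 hkZ) (Nat.cast_nonneg _)

/-- (Theorem 1, Section IV, quantitative form) With `(a_n)` the PTM sequence,
`N = 2^{M+1}`, `β_m = Σ_{n<N} a_n n^m`, and `s_n = x` if `a_n = 0`, `s_n = y` if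
`a_n = 1`: for every `0 ≤ m ≤ M` and every lag `-(L-1) ≤ k ≤ L-1`,
`Σ_{n<N} n^m C_{s_n}(k) = β_m (C_x(k) + C_y(k))`; in particular, if
`|C_x(k) + C_y(k)| ≤ δ` for all `0 < |k| < Z`, then
`|Σ_{n<N} n^m C_{s_n}(k)| ≤ β_m δ` for all such `k` and all `0 ≤ m ≤ M`. -/
theorem stmt16 (M L Z : ℕ) (hZ1 : 1 ≤ Z) (hZL : Z ≤ L)
    (a : ℕ → ℕ) (ha0 : a 0 = 0)
    (hae : ∀ k, a (2 * k) = a k) (hao : ∀ k, a (2 * k + 1) = 1 - a k)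
    (x y : ℕ → ℂ) (s : ℕ → ℕ → ℂ) (hs : ∀ n, s n = if a n = 0 then x else y)
    (δ : ℝ) (hδ : 0 ≤ δ) :
    (∀ m ≤ M, ∀ k : ℤ, |k| ≤ (L : ℤ) - 1 →
      ∑ n ∈ Finset.range (2 ^ (M + 1)), (n : ℂ) ^ m * aCorr L (s n) (s n) k
        = ((∑ n ∈ Finset.range (2 ^ (M + 1)), a n * n ^ m : ℕ) : ℂ)
            * (aCorr L x x k + aCorr L y y k)) ∧
    ((∀ k : ℤ, 0 < |k| → |k| < (Z : ℤ) →
        ‖aCorr L x x k + aCorr L y y k‖ ≤ δ) →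
      ∀ m ≤ M, ∀ k : ℤ, 0 < |k| → |k| < (Z : ℤ) →
        ‖∑ n ∈ Finset.range (2 ^ (M + 1)),
            (n : ℂ) ^ m * aCorr L (s n) (s n) k‖
          ≤ ((∑ n ∈ Finset.range (2 ^ (M + 1)), a n * n ^ m : ℕ) : ℝ) * δ) :=
  stmt16_general M L Z a ha0 hae hao x y s hs δ
end
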